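/- For the (2j+2)-dimensional irreducible representation πⱼ of su(2) with invariant Hermitian inner product, the map p_j(X) := ((2j+1)(2j+3))^{-1/2} πⱼ(X) equals the Clifford homomorphism obtained from the projection of Wⱼ ⊗ ℂ³ onto its Wⱼ-summand, where the isometric embedding ι: Wⱼ → Wⱼ ⊗ ℂ³ is ι(φ) = -((2j+1)(2j+3))^{-1/2} Σᵢ πⱼ(σᵢ)φ ⊗ eᵢ. Equivalently, ⟨p_j(X)φ, ψ⟩ = ((2j+1)(2j+3))^{-1/2} ⟨πⱼ(X)φ, ψ⟩ for all φ, ψ ∈ Wⱼ and X ∈ ℝ³ ≅ su(2). -/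

import Mathlib

open scoped ComplexInnerProductSpace

/-! Since `Pr` is the adjoint of `ι`, the pairing `⟪Pr (φ ⊗ X), ψ⟫` equals
`-c ∑ᵢ Xᵢ ⟪φ, πⱼ(σᵢ) ψ⟫` with `c = ((2j+1)(2j+3))^{-1/2}`, and skew-adjointness of `πⱼ(σᵢ)`
moves each `πⱼ(σᵢ)` to the left at the cost of the sign. -/

section

variable {𝕜 E : Type*} [RCLike 𝕜] [NormedAddCommGroup E] [InnerProductSpace 𝕜 E]

open scoped InnerProductSpace

theorem LinearMap.inner_apply_right_of_adjoint_eq_neg [FiniteDimensional 𝕜 E]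
    {T : E →ₗ[𝕜] E} (hT : LinearMap.adjoint T = -T) (x y : E) :
    ⟪x, T y⟫_𝕜 = -⟪T x, y⟫_𝕜 := by
  rw [← LinearMap.adjoint_inner_left, hT, LinearMap.neg_apply, inner_neg_left]

theorem PiLp.inner_toLp_smul_left {ι : Type*} [Fintype ι] (a : ι → 𝕜) (φ : E)
    (v : PiLp 2 fun _ : ι => E) :
    ⟪WithLp.toLp 2 (fun i => a i • φ), v⟫_𝕜 = ∑ i, (starRingEnd 𝕜) (a i) * ⟪φ, v i⟫_𝕜 := by
  simp only [PiLp.inner_apply, inner_smul_left]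

theorem LinearMap.inner_sum_smul_apply_left {ι : Type*} [Fintype ι] (a : ι → 𝕜)
    (A : ι → E →ₗ[𝕜] E) (φ ψ : E) :
    ⟪(∑ i, a i • A i) φ, ψ⟫_𝕜 = ∑ i, (starRingEnd 𝕜) (a i) * ⟪A i φ, ψ⟫_𝕜 := by
  simp only [LinearMap.sum_apply, LinearMap.smul_apply, sum_inner, inner_smul_left]

end

theorem clifford_hom_eq_scaled_lie_action (j : ℕ) (W : Type*) [NormedAddCommGroup W]
    [InnerProductSpace ℂ W] [FiniteDimensional ℂ W]
    (A : Fin 3 → W →ₗ[ℂ] W)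
    (hskew : ∀ i, LinearMap.adjoint (A i) = -A i)
    (ι : W → PiLp 2 fun _ : Fin 3 => W)
    (hι : ∀ φ, ι φ = (WithLp.equiv 2 (∀ _ : Fin 3, W)).symm
      (fun i => (-((Real.sqrt ((2 * (j : ℝ) + 1) * (2 * (j : ℝ) + 3)))⁻¹ : ℝ) : ℂ) • A i φ))
    (Pr : (PiLp 2 fun _ : Fin 3 => W) →ₗ[ℂ] W)    -- the orthogonal projection Π_j
    (hPr : ∀ (v : PiLp 2 fun _ : Fin 3 => W) (ψ : W), ⟪Pr v, ψ⟫ = ⟪v, ι ψ⟫) :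
    ∀ (X : Fin 3 → ℝ) (φ ψ : W),
      ⟪Pr ((WithLp.equiv 2 (∀ _ : Fin 3, W)).symm fun i => ((X i : ℝ) : ℂ) • φ), ψ⟫
        = (((Real.sqrt ((2 * (j : ℝ) + 1) * (2 * (j : ℝ) + 3)))⁻¹ : ℝ) : ℂ)
          * ⟪(∑ i, ((X i : ℝ) : ℂ) • A i) φ, ψ⟫ := by
  intro X φ ψ
  rw [hPr, hι, WithLp.equiv_symm_apply, PiLp.inner_toLp_smul_left,
    LinearMap.inner_sum_smul_apply_left, Finset.mul_sum]
  refine Finset.sum_congr rfl fun i _ => ?_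
  rw [PiLp.toLp_apply, inner_smul_right,
    LinearMap.inner_apply_right_of_adjoint_eq_neg (hskew i), Complex.conj_ofReal]
  ring
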